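/- arXiv:1203.3742 — 9 statements merged into one kernel-verified Lean document; each statement's English description precedes it below -/
import Mathlib

section
/- Let X ⊆ ℝⁿ be a nonempty convex set with nonempty interior, φ : ℝⁿ → ℝ concave on X, A : ℝⁿ → ℝᵐ linear, b ∈ ℝᵐ, and F : ℝⁿ → ℝ with F(x) ≥ 0 for all x in the interior of X. Fix ν > 0, t > 0 and y ∈ ℝᵐ. Suppose x̄ lies in the interior of X, A x̄ = b, and the barrier segment bound holds: for every x ∈ X and every τ ∈ [0,1), F(x̄ + τ(x − x̄)) ≤ F(x̄) − ν·ln(1 − τ). Assume the supremum defining g(y) is attained at some point x*(y) ∈ X and that g(y;t) is finite. Then g(y) − φ(x̄) ≥ 0, g(y;t) − φ(x̄) + t·F(x̄) ≥ 0, and g(y;t) ≤ g(y) ≤ g(y;t) + t·(ν + F(x̄)) + 2·√(tν)·√(g(y;t) + t·F(x̄) − φ(x̄)). -/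
/-!
Write `ψ x = φ x + ⟪y, A x - b⟫`, which is concave on `X` and equals `φ` at `x̄`, and let `x*`
maximize `ψ` on `X`. For `τ ∈ [0, 1)` the point `x_τ = x̄ + τ (x* - x̄)` lies in the interior of `X`,
so testing the smoothed supremum at `x_τ`, with concavity of `ψ`, the barrier bound and
`-log (1 - τ) ≤ τ / (1 - τ)`, gives
`τ Δ ≤ S + t ν τ / (1 - τ)` with `Δ = g(y) - φ(x̄)` and `S = g(y;t) + t F(x̄) - φ(x̄)`.
The choice `1 - τ = √(t ν / Δ)` turns this into `(√Δ - √(t ν))² ≤ S`.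
-/

open scoped RealInnerProductSpace

open Set

lemma Real.neg_log_one_sub_le_div {τ : ℝ} (hτ : τ < 1) : -Real.log (1 - τ) ≤ τ / (1 - τ) := by
  have h := Real.one_sub_inv_le_log_of_pos (sub_pos.2 hτ)
  have h' : 1 - (1 - τ)⁻¹ = -(τ / (1 - τ)) := by
    field_simp [(sub_pos.2 hτ).ne']
    ring
  linarith

lemma le_add_add_two_mul_sqrt_mul_sqrt_of_forall_Ico {Δ S a : ℝ} (hS : 0 ≤ S) (ha : 0 < a)
    (h : ∀ τ ∈ Ico (0 : ℝ) 1, τ * Δ ≤ S + a * (τ / (1 - τ))) :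
    Δ ≤ S + a + 2 * √a * √S := by
  rcases le_or_gt Δ a with hΔa | haΔ
  · nlinarith [Real.sqrt_nonneg a, Real.sqrt_nonneg S]
  set u := √Δ
  set v := √a
  have hu2 : u ^ 2 = Δ := Real.sq_sqrt (ha.trans haΔ).le
  have hv2 : v ^ 2 = a := Real.sq_sqrt ha.le
  have hv0 : 0 < v := Real.sqrt_pos.2 ha
  have hvu : v < u := Real.sqrt_lt_sqrt ha.le haΔ
  have hu0 : 0 < u := hv0.trans hvu
  have hτ : 1 - v / u ∈ Ico (0 : ℝ) 1 :=
    ⟨by rw [sub_nonneg, div_le_one hu0]; exact hvu.le, by linarith [div_pos hv0 hu0]⟩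
  have hgap : (u - v) ^ 2 ≤ S := by
    have key := h _ hτ
    have hl : (1 - v / u) * Δ = u * (u - v) := by rw [← hu2]; field_simp
    have hr : a * ((1 - v / u) / (1 - (1 - v / u))) = v * (u - v) := by
      rw [sub_sub_cancel, ← hv2]; field_simp
    rw [hl, hr] at key
    nlinarith
  have hsqrt : u - v ≤ √S := (le_abs_self _).trans (Real.abs_le_sqrt hgap)
  calc Δ = u ^ 2 := hu2.symm
    _ ≤ (v + √S) ^ 2 := pow_le_pow_left₀ hu0.le (by linarith) 2
    _ = S + a + 2 * v * √S := by rw [add_sq, hv2, Real.sq_sqrt hS]; ring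

section ConcaveBarrier

variable {E : Type*} [AddCommGroup E] [Module ℝ E] [TopologicalSpace E]
  [IsTopologicalAddGroup E] [ContinuousConstSMul ℝ E] {X : Set E} {x₀ : E}

lemma Convex.add_smul_sub_mem_interior_of_mem_Ico (hX : Convex ℝ X) (hx₀ : x₀ ∈ interior X)
    {x : E} (hx : x ∈ X) {τ : ℝ} (hτ : τ ∈ Ico (0 : ℝ) 1) : x₀ + τ • (x - x₀) ∈ interior X := by
  have h := hX.add_smul_sub_mem_interior hx hx₀ (t := 1 - τ) ⟨by linarith [hτ.2], by linarith [hτ.1]⟩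
  convert h using 1
  module

variable {ψ F : E → ℝ} {ν t s : ℝ}

lemma ConcaveOn.mul_sub_le_of_barrier (hX : Convex ℝ X) (hψ : ConcaveOn ℝ X ψ) (hν : 0 ≤ ν)
    (ht : 0 ≤ t) (hx₀ : x₀ ∈ interior X)
    (hbarrier : ∀ x ∈ X, ∀ τ ∈ Ico (0 : ℝ) 1, F (x₀ + τ • (x - x₀)) ≤ F x₀ - ν * Real.log (1 - τ))
    (hs : s ∈ upperBounds ((fun x => ψ x - t * F x) '' interior X))
    {x : E} (hx : x ∈ X) {τ : ℝ} (hτ : τ ∈ Ico (0 : ℝ) 1) :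
    τ * (ψ x - ψ x₀) ≤ s + t * F x₀ - ψ x₀ + t * ν * (τ / (1 - τ)) := by
  have hconc : (1 - τ) * ψ x₀ + τ * ψ x ≤ ψ (x₀ + τ • (x - x₀)) := by
    have h := hψ.2 (interior_subset hx₀) hx (sub_nonneg.2 hτ.2.le) hτ.1 (by ring)
    have hseg : (1 - τ) • x₀ + τ • x = x₀ + τ • (x - x₀) := by module
    simpa only [hseg, smul_eq_mul] using h
  have hF : F (x₀ + τ • (x - x₀)) ≤ F x₀ + ν * (τ / (1 - τ)) := by
    have hlog := mul_le_mul_of_nonneg_left (Real.neg_log_one_sub_le_div hτ.2) hν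
    linarith [hbarrier x hx τ hτ]
  have hsmooth := hs ⟨_, hX.add_smul_sub_mem_interior_of_mem_Ico hx₀ hx hτ, rfl⟩
  nlinarith [mul_le_mul_of_nonneg_left hF ht]

theorem ConcaveOn.barrier_smoothing_bounds (hX : Convex ℝ X) (hψ : ConcaveOn ℝ X ψ)
    (hF : ∀ x ∈ interior X, 0 ≤ F x) (hν : 0 < ν) (ht : 0 < t) (hx₀ : x₀ ∈ interior X)
    (hbarrier : ∀ x ∈ X, ∀ τ ∈ Ico (0 : ℝ) 1, F (x₀ + τ • (x - x₀)) ≤ F x₀ - ν * Real.log (1 - τ))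
    {g gt : ℝ} (hg : IsGreatest (ψ '' X) g)
    (hgt : IsLUB ((fun x => ψ x - t * F x) '' interior X) gt) :
    0 ≤ g - ψ x₀ ∧ 0 ≤ gt - ψ x₀ + t * F x₀ ∧ gt ≤ g ∧
      g ≤ gt + t * (ν + F x₀) + 2 * √(t * ν) * √(gt + t * F x₀ - ψ x₀) := by
  have hg₀ : ψ x₀ ≤ g := hg.2 ⟨x₀, interior_subset hx₀, rfl⟩
  have hgt₀ : ψ x₀ - t * F x₀ ≤ gt := hgt.1 ⟨x₀, hx₀, rfl⟩
  have hgt_le : gt ≤ g := hgt.2 <| by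
    rintro _ ⟨x, hx, rfl⟩
    nlinarith [hg.2 ⟨x, interior_subset hx, rfl⟩, mul_nonneg ht.le (hF x hx)]
  refine ⟨by linarith, by linarith, hgt_le, ?_⟩
  obtain ⟨⟨xs, hxs, rfl⟩, -⟩ := hg
  have h := le_add_add_two_mul_sqrt_mul_sqrt_of_forall_Ico (by linarith) (mul_pos ht hν)
    fun τ hτ => hψ.mul_sub_le_of_barrier hX hν.le ht.le hx₀ hbarrier hgt.1 hxs hτ
  linarith

end ConcaveBarrier

theorem stmt0_general {n m : ℕ} (X : Set (EuclideanSpace ℝ (Fin n)))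
    (hXconv : Convex ℝ X)
    (φ : EuclideanSpace ℝ (Fin n) → ℝ) (hφ : ConcaveOn ℝ X φ)
    (A : EuclideanSpace ℝ (Fin n) →ₗ[ℝ] EuclideanSpace ℝ (Fin m))
    (b : EuclideanSpace ℝ (Fin m))
    (F : EuclideanSpace ℝ (Fin n) → ℝ) (hF : ∀ x ∈ interior X, 0 ≤ F x)
    (ν t : ℝ) (hν : 0 < ν) (ht : 0 < t) (y : EuclideanSpace ℝ (Fin m))
    (xbar : EuclideanSpace ℝ (Fin n)) (hxbar : xbar ∈ interior X)
    (hAxbar : A xbar = b)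
    (hbarrier : ∀ x ∈ X, ∀ τ ∈ Set.Ico (0:ℝ) 1,
      F (xbar + τ • (x - xbar)) ≤ F xbar - ν * Real.log (1 - τ))
    (gy gyt : ℝ)
    (hgy : IsGreatest {z : ℝ | ∃ x ∈ X, z = φ x + ⟪y, A x - b⟫} gy)
    (hgyt : IsLUB {z : ℝ | ∃ x ∈ interior X, z = φ x + ⟪y, A x - b⟫ - t * F x} gyt) :
    0 ≤ gy - φ xbar ∧ 0 ≤ gyt - φ xbar + t * F xbar ∧
    gyt ≤ gy ∧
    gy ≤ gyt + t * (ν + F xbar) +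
      2 * Real.sqrt (t * ν) * Real.sqrt (gyt + t * F xbar - φ xbar) := by
  set ψ := fun x => φ x + ⟪y, A x - b⟫ with hψ_def
  have hψ : ConcaveOn ℝ X ψ :=
    hφ.add (((innerₛₗ ℝ y).comp A).concaveOn hXconv |>.add_const (-⟪y, b⟫)
      |>.congr fun x _ => by simp [inner_sub_right, ← sub_eq_add_neg])
  have hψxbar : ψ xbar = φ xbar := by simp [hψ_def, hAxbar]
  have hgy' : IsGreatest (ψ '' X) gy := by convert hgy using 2; ext; simp [hψ_def, eq_comm]
  have hgyt' : IsLUB ((fun x => ψ x - t * F x) '' interior X) gyt := by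
    convert hgyt using 2; ext; simp [hψ_def, eq_comm]
  simpa only [hψxbar] using hψ.barrier_smoothing_bounds hXconv hF hν ht hxbar hbarrier hgy' hgyt'

/-- Smoothing via barrier functions: estimate of the dual function
`g(y)` by the smoothed dual function `g(y;t)` (Lemma `le:barrier_smooth`). -/
theorem stmt0 {n m : ℕ} (X : Set (EuclideanSpace ℝ (Fin n)))
    (hXne : X.Nonempty) (hXconv : Convex ℝ X) (hXint : (interior X).Nonempty)
    (φ : EuclideanSpace ℝ (Fin n) → ℝ) (hφ : ConcaveOn ℝ X φ)
    (A : EuclideanSpace ℝ (Fin n) →ₗ[ℝ] EuclideanSpace ℝ (Fin m))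
    (b : EuclideanSpace ℝ (Fin m))
    (F : EuclideanSpace ℝ (Fin n) → ℝ) (hF : ∀ x ∈ interior X, 0 ≤ F x)
    (ν t : ℝ) (hν : 0 < ν) (ht : 0 < t) (y : EuclideanSpace ℝ (Fin m))
    (xbar : EuclideanSpace ℝ (Fin n)) (hxbar : xbar ∈ interior X)
    (hAxbar : A xbar = b)
    (hbarrier : ∀ x ∈ X, ∀ τ ∈ Set.Ico (0:ℝ) 1,
      F (xbar + τ • (x - xbar)) ≤ F xbar - ν * Real.log (1 - τ))
    (gy gyt : ℝ)
    (hgy : IsGreatest {z : ℝ | ∃ x ∈ X, z = φ x + ⟪y, A x - b⟫} gy)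
    (hgyt : IsLUB {z : ℝ | ∃ x ∈ interior X, z = φ x + ⟪y, A x - b⟫ - t * F x} gyt) :
    0 ≤ gy - φ xbar ∧ 0 ≤ gyt - φ xbar + t * F xbar ∧
    gyt ≤ gy ∧
    gy ≤ gyt + t * (ν + F xbar) +
      2 * Real.sqrt (t * ν) * Real.sqrt (gyt + t * F xbar - φ xbar) :=
  stmt0_general X hXconv φ hφ A b F hF ν t hν ht y xbar hxbar hAxbar hbarrier gy gyt hgy hgyt
end

section
/- Let p < q be real numbers and c > 0. Set S := sup_{τ ∈ [0,1)} { (1 − τ)·p + τ·q + c·ln(1 − τ) }. Then q ≤ S + c + c·max(0, ln((q − p)/c)). -/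
/-!
Every τ ∈ [0,1) gives a lower bound for the supremum. If `q - p ≤ c`, take `τ = 0`:
the value is `p ≥ q - c`. Otherwise the concave function of `τ` is maximised at
`1 - τ = c / (q - p) ∈ (0,1)`, where its value is exactly `q - c - c log ((q - p) / c)`.
-/

open Real Set

lemma bddAbove_convexCombination_add_log (p q : ℝ) {c : ℝ} (hc : 0 ≤ c) :
    BddAbove {z : ℝ | ∃ τ ∈ Ico (0:ℝ) 1, z = (1 - τ) * p + τ * q + c * log (1 - τ)} := by
  refine ⟨max p q, ?_⟩
  rintro z ⟨τ, ⟨hτ0, hτ1⟩, rfl⟩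
  have hlog : c * log (1 - τ) ≤ 0 :=
    mul_nonpos_of_nonneg_of_nonpos hc (log_nonpos (by linarith) (by linarith))
  have hcomb : (1 - τ) * p + τ * q ≤ max p q := by
    nlinarith [le_max_left p q, le_max_right p q]
  linarith

lemma convexCombination_add_log_at_optimum (p q : ℝ) {c : ℝ} (hne : q - p ≠ 0) :
    (1 - (1 - c / (q - p))) * p + (1 - c / (q - p)) * q + c * log (1 - (1 - c / (q - p)))
      = q - c - c * log ((q - p) / c) := by
  rw [sub_sub_cancel, ← inv_div, log_inv]
  field_simp
  ring

lemma exists_mem_Ico_le_convexCombination_add_log (p q : ℝ) {c : ℝ} (hc : 0 < c) :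
    ∃ τ ∈ Ico (0:ℝ) 1,
      q - c - c * max 0 (log ((q - p) / c)) ≤ (1 - τ) * p + τ * q + c * log (1 - τ) := by
  rcases le_or_gt (q - p) c with hle | hgt
  · refine ⟨0, ⟨le_rfl, zero_lt_one⟩, ?_⟩
    have : 0 ≤ c * max 0 (log ((q - p) / c)) := by positivity
    simp only [sub_zero, one_mul, zero_mul, add_zero, log_one, mul_zero]
    linarith
  · have hpos : 0 < q - p := hc.trans hgt
    have hratio : 0 < c / (q - p) ∧ c / (q - p) < 1 :=
      ⟨div_pos hc hpos, (div_lt_one hpos).mpr hgt⟩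
    refine ⟨1 - c / (q - p), ⟨by linarith, by linarith⟩, ?_⟩
    have hlog : 0 ≤ log ((q - p) / c) := log_nonneg ((le_div_iff₀ hc).mpr (by linarith))
    rw [convexCombination_add_log_at_optimum p q hpos.ne', max_eq_right hlog]

theorem stmt2_general (p q c : ℝ) (hc : 0 < c) :
    q ≤ sSup {z : ℝ | ∃ τ ∈ Set.Ico (0:ℝ) 1,
          z = (1 - τ) * p + τ * q + c * Real.log (1 - τ)} +
        c + c * max 0 (Real.log ((q - p) / c)) := by
  obtain ⟨τ, hτ, hle⟩ := exists_mem_Ico_le_convexCombination_add_log p q hc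
  have hsup := le_csSup (bddAbove_convexCombination_add_log p q hc.le) ⟨τ, hτ, rfl⟩
  linarith

/-- if `S := sup_{τ ∈ [0,1)} { (1-τ)p + τq + c ln(1-τ) }` then
`q ≤ S + c + c·[ln((q-p)/c)]₊`. -/
theorem stmt2 (p q c : ℝ) (hpq : p < q) (hc : 0 < c) :
    q ≤ sSup {z : ℝ | ∃ τ ∈ Set.Ico (0:ℝ) 1,
          z = (1 - τ) * p + τ * q + c * Real.log (1 - τ)} +
        c + c * max 0 (Real.log ((q - p) / c)) :=
  stmt2_general p q c hc
end

section
/- Let g : ℝᵐ → ℝ be differentiable and let t > 0, c > 0. Suppose that for all y, ŷ ∈ ℝᵐ, ⟨∇g(y) − ∇g(ŷ), y − ŷ⟩ ≥ t·‖∇g(y) − ∇g(ŷ)‖² / ( c·( c + ‖∇g(y) − ∇g(ŷ)‖ ) ). Then for all y, ŷ ∈ ℝᵐ with c·‖ŷ − y‖ < t, g(ŷ) ≤ g(y) + ⟨∇g(y), ŷ − y⟩ + t·ω*( c·‖ŷ − y‖ / t ). -/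
/-!
By Cauchy–Schwarz, the hypothesis bounds the growth of the gradient:
`‖∇g x − ∇g y‖ (t − c‖x − y‖) ≤ c² ‖x − y‖`. Along the segment `y + s d`, `d = ŷ − y`,
`r = c‖d‖`, the derivative of `s ↦ g(y + s d) − s ⟪∇g y, d⟫` is therefore at most
`s r² / (t − s r)`, which is the derivative of `s ↦ t ω*(s r / t)`; comparing the two functions
on `[0, 1]` gives the bound.
-/

open scoped RealInnerProductSpace

/-- `ω*(u) := −u − ln(1 − u)` for `u ∈ [0,1)`. -/
noncomputable def omegaStar (u : ℝ) : ℝ := -u - Real.log (1 - u)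

open Set

theorem hasDerivAt_omegaStar {u : ℝ} (hu : u < 1) : HasDerivAt omegaStar (u / (1 - u)) u := by
  have h1u : 1 - u ≠ 0 := (sub_pos.2 hu).ne'
  have h := ((hasDerivAt_id' u).neg.sub (((hasDerivAt_id' u).const_sub 1).log h1u))
  refine h.congr_deriv ?_
  field_simp
  ring

theorem hasDerivAt_mul_omegaStar_mul_div {t r s : ℝ} (ht : 0 < t) (hs : s * r < t) :
    HasDerivAt (fun s ↦ t * omegaStar (s * r / t)) (s * r ^ 2 / (t - s * r)) s := by
  have hu : s * r / t < 1 := (div_lt_one ht).2 hs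
  have h := ((hasDerivAt_omegaStar hu).comp s
    (((hasDerivAt_id' s).mul_const r).div_const t)).const_mul t
  refine h.congr_deriv ?_
  have : t - s * r ≠ 0 := (sub_pos.2 hs).ne'
  field_simp

section InnerProductSpace

variable {E : Type*} [NormedAddCommGroup E] [InnerProductSpace ℝ E] {t c : ℝ}

theorem norm_mul_sub_le_of_div_le_inner {a h : E} (hc : 0 < c)
    (hah : t * ‖a‖ ^ 2 / (c * (c + ‖a‖)) ≤ ⟪a, h⟫) : ‖a‖ * (t - c * ‖h‖) ≤ c ^ 2 * ‖h‖ := by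
  rcases (norm_nonneg a).eq_or_lt with ha | ha
  · rw [← ha, zero_mul]; positivity
  have hden : 0 < c * (c + ‖a‖) := by positivity
  have hcs : t * ‖a‖ ^ 2 ≤ c * (c + ‖a‖) * (‖a‖ * ‖h‖) := by
    rw [div_le_iff₀' hden] at hah
    exact hah.trans (mul_le_mul_of_nonneg_left (real_inner_le_norm a h) hden.le)
  nlinarith

theorem inner_le_of_div_le_inner_smul {a d : E} {s : ℝ} (hc : 0 < c) (hs : 0 ≤ s)
    (hst : s * (c * ‖d‖) < t) (had : t * ‖a‖ ^ 2 / (c * (c + ‖a‖)) ≤ ⟪a, s • d⟫) :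
    ⟪a, d⟫ ≤ s * (c * ‖d‖) ^ 2 / (t - s * (c * ‖d‖)) := by
  have hpos : 0 < t - s * (c * ‖d‖) := sub_pos.2 hst
  have hnorm := norm_mul_sub_le_of_div_le_inner hc had
  rw [norm_smul, Real.norm_of_nonneg hs] at hnorm
  rw [le_div_iff₀ hpos]
  calc ⟪a, d⟫ * (t - s * (c * ‖d‖)) ≤ ‖a‖ * ‖d‖ * (t - s * (c * ‖d‖)) :=
        mul_le_mul_of_nonneg_right (real_inner_le_norm a d) hpos.le
    _ = ‖d‖ * (‖a‖ * (t - c * (s * ‖d‖))) := by ring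
    _ ≤ ‖d‖ * (c ^ 2 * (s * ‖d‖)) := mul_le_mul_of_nonneg_left hnorm (norm_nonneg d)
    _ = s * (c * ‖d‖) ^ 2 := by ring

variable [CompleteSpace E]

theorem hasDerivAt_comp_add_smul {g : E → ℝ} {x d : E} {s : ℝ}
    (hg : DifferentiableAt ℝ g (x + s • d)) :
    HasDerivAt (fun s ↦ g (x + s • d)) ⟪gradient g (x + s • d), d⟫ s := by
  rw [inner_gradient_left]
  have h := hg.hasFDerivAt.comp_hasDerivAt s (((hasDerivAt_id' s).smul_const d).const_add x)
  rw [one_smul] at h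
  exact h

theorem le_add_inner_gradient_add_mul_omegaStar {g : E → ℝ} (hg : Differentiable ℝ g)
    (ht : 0 < t) (hc : 0 < c)
    (hmono : ∀ x y : E, t * ‖gradient g x - gradient g y‖ ^ 2 /
      (c * (c + ‖gradient g x - gradient g y‖)) ≤ ⟪gradient g x - gradient g y, x - y⟫)
    {y yhat : E} (hlt : c * ‖yhat - y‖ < t) :
    g yhat ≤ g y + ⟪gradient g y, yhat - y⟫ + t * omegaStar (c * ‖yhat - y‖ / t) := by
  set d := yhat - y
  set r := c * ‖d‖
  have hsr : ∀ s ∈ Icc (0 : ℝ) 1, s * r < t := fun s hs ↦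
    (mul_le_of_le_one_left (by positivity) hs.2).trans_lt hlt
  have hf : ∀ s ∈ Icc (0 : ℝ) 1, HasDerivAt (fun s ↦ g (y + s • d) - s * ⟪gradient g y, d⟫)
      (⟪gradient g (y + s • d), d⟫ - ⟪gradient g y, d⟫) s := fun s _ ↦
    (hasDerivAt_comp_add_smul (hg _)).sub (by simpa using (hasDerivAt_id s).mul_const _)
  have hB : ∀ s ∈ Icc (0 : ℝ) 1, HasDerivAt (fun s ↦ g y + t * omegaStar (s * r / t))
      (s * r ^ 2 / (t - s * r)) s := fun s hs ↦
    (hasDerivAt_mul_omegaStar_mul_div ht (hsr s hs)).const_add _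
  have hbound : ∀ s ∈ Ico (0 : ℝ) 1,
      ⟪gradient g (y + s • d), d⟫ - ⟪gradient g y, d⟫ ≤ s * r ^ 2 / (t - s * r) := by
    intro s hs
    rw [← inner_sub_left]
    refine inner_le_of_div_le_inner_smul hc hs.1 (hsr s (Ico_subset_Icc_self hs)) ?_
    simpa using hmono (y + s • d) y
  have key := image_le_of_deriv_right_le_deriv_boundary
    (fun s hs ↦ (hf s hs).continuousAt.continuousWithinAt)
    (fun s hs ↦ (hf s (Ico_subset_Icc_self hs)).hasDerivWithinAt) (by simp [omegaStar])
    (fun s hs ↦ (hB s hs).continuousAt.continuousWithinAt)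
    (fun s hs ↦ (hB s (Ico_subset_Icc_self hs)).hasDerivWithinAt) hbound
    (right_mem_Icc.2 zero_le_one)
  simp only [one_smul, one_mul, d, add_sub_cancel] at key
  linarith

end InnerProductSpace

/-- from the strong-monotonicity-type bound on the gradient of `g`
one gets the descent-type upper bound `g(ŷ) ≤ g(y) + ⟨∇g(y), ŷ−y⟩ + t·ω*(c‖ŷ−y‖/t)`
whenever `c‖ŷ−y‖ < t`. -/
theorem stmt4 {m : ℕ} (g : EuclideanSpace ℝ (Fin m) → ℝ) (hg : Differentiable ℝ g)
    (t c : ℝ) (ht : 0 < t) (hc : 0 < c)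
    (hmono : ∀ y yhat : EuclideanSpace ℝ (Fin m),
      t * ‖gradient g y - gradient g yhat‖ ^ 2 /
          (c * (c + ‖gradient g y - gradient g yhat‖)) ≤
        ⟪gradient g y - gradient g yhat, y - yhat⟫) :
    ∀ y yhat : EuclideanSpace ℝ (Fin m), c * ‖yhat - y‖ < t →
      g yhat ≤ g y + ⟪gradient g y, yhat - y⟫ + t * omegaStar (c * ‖yhat - y‖ / t) :=
  fun _ _ hlt ↦ le_add_inner_gradient_add_mul_omegaStar hg ht hc hmono hlt
end

section
/- Let H be a real inner product space, let d, h ∈ H and let t > 0, c > 0. If ⟨d, h⟩ ≥ t·‖d‖² / ( c·( c + ‖d‖ ) ) and c·‖h‖ < t, then ‖d‖ ≤ c²·‖h‖ / ( t − c·‖h‖ ). -/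
open scoped RealInnerProductSpace

/-! Cauchy–Schwarz bounds `⟪d, h⟫` by `‖d‖ ‖h‖`; cancelling one factor `‖d‖` turns the
hypothesis into the linear inequality `(t - c ‖h‖) ‖d‖ ≤ c² ‖h‖`. -/

lemma le_sq_mul_div_sub_of_mul_sq_div_le {x y t c : ℝ} (hx : 0 ≤ x) (hy : 0 ≤ y) (hc : 0 < c)
    (hxy : t * x ^ 2 / (c * (c + x)) ≤ x * y) (hcy : c * y < t) :
    x ≤ c ^ 2 * y / (t - c * y) := by
  have hgap : 0 < t - c * y := by linarith
  rcases hx.eq_or_lt with rfl | hx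
  · positivity
  have hcleared : t * x ^ 2 ≤ x * y * (c * (c + x)) := by
    rwa [div_le_iff₀ (by positivity)] at hxy
  have hlinear : t * x ≤ y * (c * (c + x)) := by
    nlinarith
  rw [le_div_iff₀ hgap]
  linarith

theorem stmt5_general {H : Type*} [NormedAddCommGroup H] [InnerProductSpace ℝ H]
    (d h : H) (t c : ℝ) (hc : 0 < c)
    (h1 : t * ‖d‖ ^ 2 / (c * (c + ‖d‖)) ≤ ⟪d, h⟫)
    (h2 : c * ‖h‖ < t) :
    ‖d‖ ≤ c ^ 2 * ‖h‖ / (t - c * ‖h‖) :=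
  le_sq_mul_div_sub_of_mul_sq_div_le (norm_nonneg d) (norm_nonneg h) hc
    (h1.trans (real_inner_le_norm d h)) h2

/-- if `⟨d,h⟩ ≥ t‖d‖²/(c(c+‖d‖))` and `c‖h‖ < t` then
`‖d‖ ≤ c²‖h‖/(t − c‖h‖)`. -/
theorem stmt5 {H : Type*} [NormedAddCommGroup H] [InnerProductSpace ℝ H]
    (d h : H) (t c : ℝ) (ht : 0 < t) (hc : 0 < c)
    (h1 : t * ‖d‖ ^ 2 / (c * (c + ‖d‖)) ≤ ⟪d, h⟫)
    (h2 : c * ‖h‖ < t) :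
    ‖d‖ ≤ c ^ 2 * ‖h‖ / (t - c * ‖h‖) :=
  stmt5_general d h t c hc h1 h2
end

section
/- Let t̲ > 0, c̄ > 0 and G* be real numbers, and let (G_k)_{k≥0} and (λ_k)_{k≥0} be real sequences with λ_k ≥ 0 and G_k ≥ G* for all k. If G_{k+1} ≤ G_k − (t̲/2)·ω( λ_{k+1} / c̄ ) for all k ≥ 0, then λ_k → 0 as k → ∞. -/
/-!
`G` decreases by at least `(t̲/2) ω(λ_{k+1}/c̄) ≥ 0` per step and is bounded below, so it converges
and these decrements tend to zero. Since `ω` is strictly increasing on `[0, ∞)` with `ω 0 = 0`,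
`ω(s_k) → 0` forces `s_k → 0` for nonnegative `s_k`.
-/

open Filter Topology

/-- The paper's `ω`. -/
noncomputable def nesterovOmega (s : ℝ) : ℝ := s - Real.log (1 + s)

lemma nesterovOmega_zero : nesterovOmega 0 = 0 := by
  simp [nesterovOmega]

/-- For `0 ≤ x < y`, `ω y - ω x = (y - x) - log ((1 + y) / (1 + x))` and the logarithm is
strictly below `(y - x) / (1 + x) ≤ y - x`. -/
lemma strictMonoOn_nesterovOmega : StrictMonoOn nesterovOmega (Set.Ici 0) := by
  intro x (hx : 0 ≤ x) y (hy : 0 ≤ y) hxy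
  have hx1 : 0 < 1 + x := by linarith
  have hratio_ne : (1 + y) / (1 + x) ≠ 1 := by
    rw [Ne, div_eq_one_iff_eq hx1.ne']
    linarith
  have hlog : Real.log ((1 + y) / (1 + x)) < (1 + y) / (1 + x) - 1 :=
    Real.log_lt_sub_one_of_pos (by positivity) hratio_ne
  have hratio_le : (1 + y) / (1 + x) - 1 ≤ y - x := by
    rw [div_sub_one hx1.ne', div_le_iff₀ hx1]
    nlinarith
  rw [Real.log_div (by positivity) hx1.ne'] at hlog
  unfold nesterovOmega
  linarith

lemma nesterovOmega_nonneg {s : ℝ} (hs : 0 ≤ s) : 0 ≤ nesterovOmega s :=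
  nesterovOmega_zero ▸
    strictMonoOn_nesterovOmega.monotoneOn Set.self_mem_Ici (Set.mem_Ici.mpr hs) hs

lemma tendsto_zero_of_le_sub_succ {G a : ℕ → ℝ} (ha : ∀ k, 0 ≤ a k)
    (hbdd : BddBelow (Set.range G)) (hdec : ∀ k, G (k + 1) ≤ G k - a k) :
    Tendsto a atTop (𝓝 0) := by
  have hanti : Antitone G := antitone_nat_of_succ_le fun k => by linarith [hdec k, ha k]
  have hlim := tendsto_atTop_ciInf hanti hbdd
  have hdiff : Tendsto (fun k => G k - G (k + 1)) atTop (𝓝 0) := by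
    simpa using hlim.sub (hlim.comp (tendsto_add_atTop_nat 1))
  exact squeeze_zero ha (fun k => by linarith [hdec k]) hdiff

lemma StrictMonoOn.tendsto_zero_of_tendsto_comp {f : ℝ → ℝ} (hf : StrictMonoOn f (Set.Ici 0))
    (hf0 : f 0 = 0) {l : Filter ℕ} {s : ℕ → ℝ} (hs : ∀ k, 0 ≤ s k)
    (hfs : Tendsto (fun k => f (s k)) l (𝓝 0)) : Tendsto s l (𝓝 0) := by
  rw [tendsto_order]
  refine ⟨fun b hb => Eventually.of_forall fun k => hb.trans_le (hs k), fun ε hε => ?_⟩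
  have hfε : 0 < f ε := hf0 ▸ hf Set.self_mem_Ici (Set.mem_Ici.mpr hε.le) hε
  filter_upwards [(tendsto_order.1 hfs).2 _ hfε] with k hk
  exact (hf.lt_iff_lt (Set.mem_Ici.mpr (hs k)) (Set.mem_Ici.mpr hε.le)).1 hk

/-- if `G_{k+1} ≤ G_k − (t̲/2)·ω(λ_{k+1}/c̄)` with `G_k` bounded
below and `λ_k ≥ 0`, then `λ_k → 0`. -/
theorem stmt8 (tlow cbar gstar : ℝ) (htlow : 0 < tlow) (hcbar : 0 < cbar)
    (G lam : ℕ → ℝ) (hlam : ∀ k, 0 ≤ lam k) (hG : ∀ k, gstar ≤ G k)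
    (hrec : ∀ k, G (k + 1) ≤ G k -
      (tlow / 2) * (lam (k + 1) / cbar - Real.log (1 + lam (k + 1) / cbar))) :
    Filter.Tendsto lam Filter.atTop (nhds 0) := by
  have hs : ∀ k, 0 ≤ lam (k + 1) / cbar := fun k => div_nonneg (hlam _) hcbar.le
  have hdecrement : Tendsto (fun k => tlow / 2 * nesterovOmega (lam (k + 1) / cbar))
      atTop (𝓝 0) :=
    tendsto_zero_of_le_sub_succ
      (fun k => mul_nonneg (by positivity) (nesterovOmega_nonneg (hs k)))
      ⟨gstar, Set.forall_mem_range.2 hG⟩ hrec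
  have homega : Tendsto (fun k => nesterovOmega (lam (k + 1) / cbar)) atTop (𝓝 0) := by
    convert hdecrement.const_mul (2 / tlow) using 2
    · field_simp
    · rw [mul_zero]
  have hscaled : Tendsto (fun k => lam (k + 1) / cbar) atTop (𝓝 0) :=
    strictMonoOn_nesterovOmega.tendsto_zero_of_tendsto_comp nesterovOmega_zero hs homega
  have hshift : Tendsto (fun k => lam (k + 1)) atTop (𝓝 0) := by
    convert hscaled.const_mul cbar using 2
    · field_simp
    · rw [mul_zero]
  exact (tendsto_add_atTop_iff_nat 1).mp hshift
end

section
/- Let c̄ > 0, r > 0, t > 0 and let (Δ_k)_{k≥0} be a sequence of nonnegative real numbers with Δ₀ ≤ (3/4)·c̄·r and Δ_{k+1} ≤ Δ_k − t·ω( Δ_k / (c̄·r) ) for all k ≥ 0. Then for every k ≥ 0, Δ_k ≤ 12·c̄²·r² / ( 16·c̄·r + 3·t·k ). -/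
/-!
Writing `C = c̄ r`, the gaps decrease (since `ω ≥ 0`), so they all stay in `[0, 3C/4]`, where
`ω(s) ≥ s²/4`. The recursion then becomes `Δ_{k+1} ≤ Δ_k - q Δ_k²` with `q = t / (4C²)`, which
forces `1/Δ_{k+1} ≥ 1/Δ_k + q`; summing gives `1/Δ_k ≥ 4/(3C) + q k`.
-/

lemma sq_div_four_le_sub_log_one_add {s : ℝ} (hs : 0 ≤ s) (hs1 : s ≤ 1) :
    s ^ 2 / 4 ≤ s - Real.log (1 + s) := by
  have hu : 0 ≤ s - s ^ 2 / 4 := by nlinarith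
  -- `1 + s ≤ 1 + u + u²/2` for `u = s - s²/4` amounts to `1/2 ≤ (1 - s/4)²`
  have hquad : 1 + s ≤ 1 + (s - s ^ 2 / 4) + (s - s ^ 2 / 4) ^ 2 / 2 := by
    nlinarith [mul_le_mul_of_nonneg_right hs1 (mul_nonneg hs hs), sq_nonneg (s * s)]
  have hlog : Real.log (1 + s) ≤ s - s ^ 2 / 4 := by
    rw [Real.log_le_iff_le_exp (by linarith)]
    exact hquad.trans (Real.quadratic_le_exp_of_nonneg hu)
  linarith

lemma sub_log_one_add_nonneg {s : ℝ} (hs : 0 ≤ s) : 0 ≤ s - Real.log (1 + s) := by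
  linarith [Real.log_le_sub_one_of_pos (show 0 < 1 + s by linarith)]

lemma inv_add_le_inv_of_le_sub_mul_sq {x y q : ℝ} (hq : 0 ≤ q) (hy : 0 < y)
    (h : y ≤ x - q * x ^ 2) : x⁻¹ + q ≤ y⁻¹ := by
  have hyx : y ≤ x := by nlinarith [sq_nonneg x]
  have hx : 0 < x := hy.trans_le hyx
  have hxy : q * (x * y) ≤ x - y := by nlinarith [mul_le_mul_of_nonneg_left hyx hx.le]
  rw [inv_eq_one_div, inv_eq_one_div, div_add' _ _ _ hx.ne', div_le_div_iff₀ hx hy]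
  nlinarith

lemma le_div_of_le_sub_mul_sq {a : ℕ → ℝ} {q A : ℝ} (hq : 0 ≤ q) (hA : 0 < A)
    (ha : ∀ k, 0 ≤ a k) (h0 : a 0 ≤ A) (hrec : ∀ k, a (k + 1) ≤ a k - q * a k ^ 2) (k : ℕ) :
    a k ≤ A / (1 + q * A * k) := by
  have hden : ∀ k : ℕ, 0 < 1 + q * A * k := fun k => by positivity
  induction k with
  | zero => simpa using h0
  | succ k ih =>
    rcases (ha (k + 1)).eq_or_lt with hzero | hpos
    · rw [← hzero]
      exact div_nonneg hA.le (hden _).le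
    · have hak : 0 < a k := hpos.trans_le (by nlinarith [hrec k, sq_nonneg (a k)])
      have hk : (1 + q * A * k) / A ≤ (a k)⁻¹ := by
        simpa only [inv_div] using inv_anti₀ hak ih
      have hk1 : (1 + q * A * (k + 1 : ℕ)) / A ≤ (a (k + 1))⁻¹ := calc
        (1 + q * A * (k + 1 : ℕ)) / A = (1 + q * A * k) / A + q := by
          push_cast; field_simp; ring
        _ ≤ (a k)⁻¹ + q := by gcongr
        _ ≤ (a (k + 1))⁻¹ := inv_add_le_inv_of_le_sub_mul_sq hq hpos (hrec k)
      simpa only [inv_inv, inv_div] using inv_anti₀ (div_pos (hden _) hA) hk1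

/-- local convergence rate of the path-following gradient method:
from `Δ₀ ≤ (3/4)c̄r` and `Δ_{k+1} ≤ Δ_k − t·ω(Δ_k/(c̄r))` one obtains
`Δ_k ≤ 12c̄²r²/(16c̄r + 3tk)`. -/
theorem stmt10 (cbar r t : ℝ) (hcbar : 0 < cbar) (hr : 0 < r) (ht : 0 < t)
    (Δ : ℕ → ℝ) (hΔ : ∀ k, 0 ≤ Δ k) (h0 : Δ 0 ≤ (3 / 4) * cbar * r)
    (hrec : ∀ k, Δ (k + 1) ≤ Δ k -
      t * (Δ k / (cbar * r) - Real.log (1 + Δ k / (cbar * r)))) :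
    ∀ k : ℕ, Δ k ≤ 12 * cbar ^ 2 * r ^ 2 / (16 * cbar * r + 3 * t * k) := by
  have hC : 0 < cbar * r := mul_pos hcbar hr
  have hanti : Antitone Δ := antitone_nat_of_succ_le fun k => by
    nlinarith [hrec k, sub_log_one_add_nonneg (div_nonneg (hΔ k) hC.le)]
  have hquad : ∀ k, Δ (k + 1) ≤ Δ k - t / (4 * (cbar * r) ^ 2) * Δ k ^ 2 := fun k => by
    have hs1 : Δ k / (cbar * r) ≤ 1 := by
      rw [div_le_one hC]
      linarith [hanti (Nat.zero_le k)]
    have hω := sq_div_four_le_sub_log_one_add (div_nonneg (hΔ k) hC.le) hs1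
    calc Δ (k + 1) ≤ Δ k - t * ((Δ k / (cbar * r)) ^ 2 / 4) := by nlinarith [hrec k]
      _ = Δ k - t / (4 * (cbar * r) ^ 2) * Δ k ^ 2 := by field_simp
  intro k
  have hbound := le_div_of_le_sub_mul_sq (A := 3 / 4 * (cbar * r)) (by positivity)
    (by positivity) hΔ (by linarith) hquad k
  convert hbound using 1
  field_simp
  ring
end

section
/- Let g : ℝᵐ → ℝ be convex and differentiable, let t > 0, c̄ > 0, let y* ∈ ℝᵐ and set g* := g(y*). Let y, v ∈ ℝᵐ, θ ∈ (0,1), define r := θ⁻¹·( v − (1 − θ)·y ), ρ := t / ( 2·θ·c̄² ), r₊ := r − ρ·∇g(v), and let y₊ ∈ ℝᵐ satisfy g(y₊) ≤ g(v) − ( t / (4·c̄²) )·‖∇g(v)‖². Then θ⁻²·( g(y₊) − g* ) + ( c̄²/t )·‖r₊ − y*‖² ≤ θ⁻²·(1 − θ)·( g(y) − g* ) + ( c̄²/t )·‖r − y*‖². -/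
/-!
Along the segment from `x` to `y` a convex function is a convex function of one variable, so its
derivative at `x` lies below the slope of the chord; this is the tangent-plane inequality
`g x + ⟪∇g x, y - x⟫ ≤ g y`. Since `θ • (r - y*) = (1 - θ) • (v - y) + θ • (v - y*)`, the tangent-plane
inequalities at `v` towards `y` and `y*`, weighted by `1 - θ` and `θ`, bound `g v` by
`(1 - θ) g y + θ g* + θ ⟪∇g v, r - y*⟫`. Expanding `‖r₊ - y*‖²` produces exactly this cross term
(with the factor `θ⁻¹`) plus `θ⁻² (t / 4c̄²) ‖∇g v‖²`, which the sufficient decrease of `y₊` absorbs.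
-/

open Set
open scoped RealInnerProductSpace

section TangentPlane

variable {E : Type*} [NormedAddCommGroup E]

theorem ConvexOn.add_apply_sub_le_of_hasFDerivAt [NormedSpace ℝ E] {f : E → ℝ} {f' : E →L[ℝ] ℝ}
    {x : E} (hf : ConvexOn ℝ univ f) (hx : HasFDerivAt f f' x) (y : E) :
    f x + f' (y - x) ≤ f y := by
  have hφ : ConvexOn ℝ univ (f ∘ AffineMap.lineMap (k := ℝ) x y) := by
    simpa using hf.comp_affineMap (AffineMap.lineMap x y)
  have hφ' : HasDerivAt (f ∘ AffineMap.lineMap (k := ℝ) x y) (f' (y - x)) 0 :=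
    hx.comp_hasDerivAt_of_eq 0 AffineMap.hasDerivAt_lineMap (by simp)
  have hslope := hφ.le_slope_of_hasDerivAt (mem_univ 0) (mem_univ 1) one_pos hφ'
  rw [slope_def_field, Function.comp_apply, Function.comp_apply, AffineMap.lineMap_apply_zero,
    AffineMap.lineMap_apply_one, sub_zero, div_one] at hslope
  linarith

variable [InnerProductSpace ℝ E] [CompleteSpace E] {f : E → ℝ} {x : E}

theorem ConvexOn.add_inner_gradient_le (hf : ConvexOn ℝ univ f) (hx : DifferentiableAt ℝ f x)
    (y : E) : f x + ⟪gradient f x, y - x⟫ ≤ f y := by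
  simpa using hf.add_apply_sub_le_of_hasFDerivAt hx.hasGradientAt.hasFDerivAt y

theorem ConvexOn.le_convexCombo_add_inner_gradient (hf : ConvexOn ℝ univ f)
    (hx : DifferentiableAt ℝ f x) {a b : ℝ} (ha : 0 ≤ a) (hb : 0 ≤ b) (hab : a + b = 1)
    (y z : E) : f x ≤ a * f y + b * f z + ⟪gradient f x, x - (a • y + b • z)⟫ := by
  have hsplit : x - (a • y + b • z) = -(a • (y - x) + b • (z - x)) :=
    calc x - (a • y + b • z) = (a + b) • x - (a • y + b • z) := by rw [hab, one_smul]
      _ = _ := by module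
  rw [hsplit, inner_neg_right, inner_add_right, real_inner_smul_right, real_inner_smul_right]
  linear_combination
    -f x * hab + a * hf.add_inner_gradient_le hx y + b * hf.add_inner_gradient_le hx z

end TangentPlane

/-- one step of the modified fast gradient scheme (Lemma
`le:accelerating_scheme`). -/
theorem stmt14 {m : ℕ} (g : EuclideanSpace ℝ (Fin m) → ℝ)
    (hconv : ConvexOn ℝ Set.univ g) (hdiff : Differentiable ℝ g)
    (t cbar : ℝ) (ht : 0 < t) (hcbar : 0 < cbar)
    (ystar y v yplus : EuclideanSpace ℝ (Fin m))
    (θ : ℝ) (hθ : θ ∈ Set.Ioo (0:ℝ) 1)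
    (hy : g yplus ≤ g v - (t / (4 * cbar ^ 2)) * ‖gradient g v‖ ^ 2) :
    θ⁻¹ ^ 2 * (g yplus - g ystar) +
      (cbar ^ 2 / t) *
        ‖(θ⁻¹ • (v - (1 - θ) • y) - (t / (2 * θ * cbar ^ 2)) • gradient g v)
          - ystar‖ ^ 2 ≤
    θ⁻¹ ^ 2 * (1 - θ) * (g y - g ystar) +
      (cbar ^ 2 / t) * ‖θ⁻¹ • (v - (1 - θ) • y) - ystar‖ ^ 2 := by
  obtain ⟨hθ0, hθ1⟩ := hθ
  set G := gradient g v
  set r := θ⁻¹ • (v - (1 - θ) • y)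
  set ρ := t / (2 * θ * cbar ^ 2)
  have hθr : θ • (r - ystar) = v - ((1 - θ) • y + θ • ystar) := by
    rw [smul_sub, smul_inv_smul₀ hθ0.ne']; module
  have hconvex : g v ≤ (1 - θ) * g y + θ * g ystar + θ * ⟪G, r - ystar⟫ := by
    rw [← real_inner_smul_right, hθr]
    exact hconv.le_convexCombo_add_inner_gradient (hdiff v) (by linarith) hθ0.le (by ring) _ _
  have hexpand : ‖r - ρ • G - ystar‖ ^ 2 =
      ‖r - ystar‖ ^ 2 - 2 * ρ * ⟪G, r - ystar⟫ + ρ ^ 2 * ‖G‖ ^ 2 := by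
    rw [sub_right_comm, norm_sub_sq_real, real_inner_smul_right, norm_smul, real_inner_comm,
      mul_pow, Real.norm_eq_abs, sq_abs]
    ring
  have hρ₁ : cbar ^ 2 / t * (2 * ρ) = θ⁻¹ := by simp only [ρ]; field_simp
  have hρ₂ : cbar ^ 2 / t * ρ ^ 2 = θ⁻¹ ^ 2 * (t / (4 * cbar ^ 2)) := by
    simp only [ρ]; field_simp; ring
  have hθ₂ : θ⁻¹ ^ 2 * θ = θ⁻¹ := by field_simp
  rw [hexpand]
  linear_combination θ⁻¹ ^ 2 * hy + θ⁻¹ ^ 2 * hconvex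
    + ⟪G, r - ystar⟫ * (hθ₂ - hρ₁) + ‖G‖ ^ 2 * hρ₂
end

section
/- Let (θ_k)_{k≥0} be defined by θ₀ = 1 and θ_{k+1} = (1/2)·θ_k·( √(θ_k² + 4) − θ_k ). Then for every k ≥ 0, 1/(2k + 1) ≤ θ_k ≤ 2/(k + 2). -/
/-!
The reciprocals `u_k = 1/θ_k` obey `u_{k+1} = 1/2 + √(u_k² + 1/4)`, i.e. `u_{k+1}² - u_{k+1} = u_k²`.
Since `u ≤ √(u² + 1/4) ≤ u + 1/2`, each step raises `u_k` by between `1/2` and `1`,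
so `1 + k/2 ≤ 1/θ_k ≤ 1 + k`.
-/

lemma sqrt_sq_add_four_eq {t : ℝ} (ht : 0 < t) :
    √(t ^ 2 + 4) = 2 * t * √(t⁻¹ ^ 2 + 1 / 4) := by
  rw [← Real.sqrt_sq (by positivity : 0 ≤ 2 * t), ← Real.sqrt_mul (by positivity)]
  congr 1
  field_simp
  ring

lemma inv_half_mul_sqrt_sub {t : ℝ} (ht : 0 < t) :
    ((1 / 2) * t * (√(t ^ 2 + 4) - t))⁻¹ = 1 / 2 + √(t⁻¹ ^ 2 + 1 / 4) := by
  rw [sqrt_sq_add_four_eq ht]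
  set r := √(t⁻¹ ^ 2 + 1 / 4)
  have hr : r ^ 2 = t⁻¹ ^ 2 + 1 / 4 := Real.sq_sqrt (by positivity)
  have ht2 : t ^ 2 * t⁻¹ ^ 2 = 1 := by field_simp
  apply inv_eq_of_mul_eq_one_right
  linear_combination t ^ 2 * hr + ht2

lemma sqrt_sq_add_quarter_le {s : ℝ} (hs : 0 ≤ s) : √(s ^ 2 + 1 / 4) ≤ s + 1 / 2 :=
  (Real.sqrt_le_left (by linarith)).2 (by nlinarith)

theorem pos_and_inv_bounds_of_rec (θ : ℕ → ℝ) (h0 : 0 < θ 0)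
    (hrec : ∀ k, θ (k + 1) = (1 / 2) * θ k * (√(θ k ^ 2 + 4) - θ k)) (k : ℕ) :
    0 < θ k ∧ (θ 0)⁻¹ + k / 2 ≤ (θ k)⁻¹ ∧ (θ k)⁻¹ ≤ (θ 0)⁻¹ + k := by
  induction k with
  | zero => simpa using h0
  | succ k ih =>
    obtain ⟨hpos, hlow, hupp⟩ := ih
    have hinv : (θ (k + 1))⁻¹ = 1 / 2 + √((θ k)⁻¹ ^ 2 + 1 / 4) := by
      rw [hrec, inv_half_mul_sqrt_sub hpos]
    have hlow' : (θ k)⁻¹ ≤ √((θ k)⁻¹ ^ 2 + 1 / 4) := Real.le_sqrt_of_sq_le (by linarith)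
    have hupp' := sqrt_sq_add_quarter_le (inv_pos.2 hpos).le
    refine ⟨inv_pos.1 (hinv ▸ by positivity), ?_, ?_⟩ <;> push_cast <;> linarith

/-- the parameter sequence `θ₀ = 1`,
`θ_{k+1} = θ_k(√(θ_k²+4) − θ_k)/2` satisfies `1/(2k+1) ≤ θ_k ≤ 2/(k+2)`. -/
theorem stmt15 (θ : ℕ → ℝ) (h0 : θ 0 = 1)
    (hrec : ∀ k, θ (k + 1) = (1 / 2) * θ k * (Real.sqrt (θ k ^ 2 + 4) - θ k)) :
    ∀ k : ℕ, 1 / (2 * (k : ℝ) + 1) ≤ θ k ∧ θ k ≤ 2 / ((k : ℝ) + 2) := by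
  intro k
  obtain ⟨hpos, hlow, hupp⟩ := pos_and_inv_bounds_of_rec θ (h0 ▸ one_pos) hrec k
  rw [h0, inv_one] at hlow hupp
  constructor
  · rw [one_div, inv_le_comm₀ (by positivity) hpos]
    linarith [k.cast_nonneg (α := ℝ)]
  · calc θ k = ((θ k)⁻¹)⁻¹ := (inv_inv _).symm
      _ ≤ (1 + (k : ℝ) / 2)⁻¹ := inv_anti₀ (by positivity) hlow
      _ = 2 / ((k : ℝ) + 2) := by field_simp; ring
end

section
/- Let g : ℝᵐ → ℝ be convex and differentiable, let t > 0, c̄ > 0, let y* ∈ ℝᵐ and set g* := g(y*). Let (θ_k)_{k≥0} satisfy θ₀ = 1 and θ_{k+1} = (1/2)·θ_k·( √(θ_k² + 4) − θ_k ). Let (y^k)_{k≥0} and (v^k)_{k≥0} be sequences in ℝᵐ with v⁰ = y⁰ such that, for every k ≥ 0: r^k := θ_k⁻¹·( v^k − (1 − θ_k)·y^k ), ρ_k := t / ( 2·c̄²·θ_k ), v^{k+1} = (1 − θ_{k+1})·y^{k+1} + θ_{k+1}·( r^k − ρ_k·∇g(v^k) ), and g(y^{k+1}) ≤ g(v^k)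 − ( t / (4·c̄²) )·‖∇g(v^k)‖². Then for every k ≥ 1, g(y^k) − g* ≤ ( 4·c̄² / ( t·(k + 1)² ) )·‖y⁰ − y*‖². -/
/-!
With `L = 2c̄²/t`, write `v^k = (1 - θ_k) y^k + θ_k r^k`; the update is then
`r^{k+1} = r^k - (L θ_k)⁻¹ ∇g(v^k)`. Adding the descent condition to the tangent inequalities of
`g` at `v^k` (towards `y^k` with weight `1 - θ_k`, towards `y*` with weight `θ_k`) gives
`g(y^{k+1}) - g* ≤ (1 - θ_k)(g(y^k) - g*) + (L/2) θ_k² (‖r^k - y*‖² - ‖r^{k+1} - y*‖²)`.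
Because `θ_{k+1}² = (1 - θ_{k+1}) θ_k²`, this telescopes to
`g(y^{k+1}) - g* ≤ (L/2) θ_k² ‖y⁰ - y*‖²`, and `θ_k ≤ 2/(k+2)`.
-/

open Set
open scoped InnerProductSpace

theorem ConvexOn.add_le_of_hasFDerivAt {E : Type*} [NormedAddCommGroup E] [NormedSpace ℝ E]
    {s : Set E} {f : E → ℝ} {f' : E →L[ℝ] ℝ} {x z : E} (hf : ConvexOn ℝ s f)
    (hx : x ∈ s) (hz : z ∈ s) (hf' : HasFDerivAt f f' x) :
    f x + f' (z - x) ≤ f z := by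
  set ℓ : ℝ →ᵃ[ℝ] E := AffineMap.lineMap x z
  have hderiv : HasDerivAt (f ∘ ℓ) (f' (z - x)) 0 :=
    HasFDerivAt.comp_hasDerivAt (0 : ℝ) (by simpa [ℓ] using hf') AffineMap.hasDerivAt_lineMap
  have h := (hf.comp_affineMap ℓ).le_slope_of_hasDerivAt (by simpa [ℓ] using hx)
    (by simpa [ℓ] using hz) zero_lt_one hderiv
  simp only [slope_def_field, Function.comp_apply, ℓ, AffineMap.lineMap_apply_one,
    AffineMap.lineMap_apply_zero, sub_zero, div_one] at h
  linarith

theorem ConvexOn.add_inner_le_of_hasGradientAt {E : Type*} [NormedAddCommGroup E]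
    [InnerProductSpace ℝ E] [CompleteSpace E] {f : E → ℝ} {G x : E} (hf : ConvexOn ℝ univ f)
    (hG : HasGradientAt f G x) (z : E) : f x + ⟪G, z - x⟫_ℝ ≤ f z :=
  hf.add_le_of_hasFDerivAt (mem_univ x) (mem_univ z) hG.hasFDerivAt

theorem accelerated_step_le {E : Type*} [NormedAddCommGroup E] [InnerProductSpace ℝ E]
    [CompleteSpace E] {f : E → ℝ} {G y r x y' : E} {L θ : ℝ} (hf : ConvexOn ℝ univ f)
    (hL : 0 < L) (hθ₀ : 0 < θ) (hθ₁ : θ ≤ 1) (hG : HasGradientAt f G ((1 - θ) • y + θ • r))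
    (hdesc : f y' ≤ f ((1 - θ) • y + θ • r) - (2 * L)⁻¹ * ‖G‖ ^ 2) :
    f y' - f x ≤ (1 - θ) * (f y - f x) +
      L / 2 * θ ^ 2 * (‖r - x‖ ^ 2 - ‖r - (L * θ)⁻¹ • G - x‖ ^ 2) := by
  set v := (1 - θ) • y + θ • r
  have hx := hf.add_inner_le_of_hasGradientAt hG x
  have hy := hf.add_inner_le_of_hasGradientAt hG y
  have hcomb : (1 - θ) * ⟪G, y - v⟫_ℝ + θ * ⟪G, x - v⟫_ℝ = -(θ * ⟪G, r - x⟫_ℝ) := by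
    rw [← real_inner_smul_right, ← real_inner_smul_right, ← inner_add_right,
      ← real_inner_smul_right, ← inner_neg_right]
    congr 1
    module
  have hnorm : ‖r - (L * θ)⁻¹ • G - x‖ ^ 2 =
      ‖r - x‖ ^ 2 - 2 * (L * θ)⁻¹ * ⟪G, r - x⟫_ℝ + (L * θ)⁻¹ ^ 2 * ‖G‖ ^ 2 := by
    rw [show r - (L * θ)⁻¹ • G - x = (r - x) - (L * θ)⁻¹ • G by abel, norm_sub_sq_real,
      real_inner_smul_right, real_inner_comm, norm_smul, mul_pow, Real.norm_eq_abs, sq_abs]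
    ring
  have hdist : L / 2 * θ ^ 2 * (‖r - x‖ ^ 2 - ‖r - (L * θ)⁻¹ • G - x‖ ^ 2) =
      θ * ⟪G, r - x⟫_ℝ - (2 * L)⁻¹ * ‖G‖ ^ 2 := by
    rw [hnorm]
    field_simp
    ring
  nlinarith [mul_le_mul_of_nonneg_left hx hθ₀.le, mul_le_mul_of_nonneg_left hy (sub_nonneg.2 hθ₁)]

theorem le_of_lyapunov_step {θ e d : ℕ → ℝ} {c : ℝ} (hθ0 : θ 0 = 1) (hθ1 : ∀ k, θ k ≤ 1)
    (hθsq : ∀ k, θ (k + 1) ^ 2 = (1 - θ (k + 1)) * θ k ^ 2)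
    (hstep : ∀ k, e (k + 1) ≤ (1 - θ k) * e k + c * θ k ^ 2 * (d k - d (k + 1))) (k : ℕ) :
    e (k + 1) ≤ c * θ k ^ 2 * (d 0 - d (k + 1)) := by
  induction k with
  | zero => simpa [hθ0] using hstep 0
  | succ k ih =>
    have h := mul_le_mul_of_nonneg_left ih (sub_nonneg.2 (hθ1 (k + 1)))
    linear_combination hstep (k + 1) + h - c * (d 0 - d (k + 1)) * hθsq k

section NesterovSequence

variable {θ : ℕ → ℝ}

theorem nesterov_succ_sq (hθ : ∀ k, θ (k + 1) = (1 / 2) * θ k * (Real.sqrt (θ k ^ 2 + 4) - θ k))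
    (k : ℕ) : θ (k + 1) ^ 2 = (1 - θ (k + 1)) * θ k ^ 2 := by
  have hsqrt : Real.sqrt (θ k ^ 2 + 4) ^ 2 = θ k ^ 2 + 4 := Real.sq_sqrt (by positivity)
  rw [hθ k]
  linear_combination (θ k ^ 2 / 4) * hsqrt

theorem nesterov_pos (hθ0 : θ 0 = 1)
    (hθ : ∀ k, θ (k + 1) = (1 / 2) * θ k * (Real.sqrt (θ k ^ 2 + 4) - θ k)) (k : ℕ) :
    0 < θ k := by
  induction k with
  | zero => simp [hθ0]
  | succ k ih =>
    have hlt : θ k < Real.sqrt (θ k ^ 2 + 4) := Real.lt_sqrt_of_sq_lt (by linarith)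
    rw [hθ k]
    exact mul_pos (by positivity) (by linarith)

theorem nesterov_le_one (hθ0 : θ 0 = 1)
    (hθ : ∀ k, θ (k + 1) = (1 / 2) * θ k * (Real.sqrt (θ k ^ 2 + 4) - θ k)) (k : ℕ) :
    θ k ≤ 1 := by
  cases k with
  | zero => exact hθ0.le
  | succ k =>
    nlinarith [nesterov_succ_sq hθ k, nesterov_pos hθ0 hθ k, nesterov_pos hθ0 hθ (k + 1)]

theorem nesterov_le_two_div (hθ0 : θ 0 = 1)
    (hθ : ∀ k, θ (k + 1) = (1 / 2) * θ k * (Real.sqrt (θ k ^ 2 + 4) - θ k)) (k : ℕ) :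
    θ k ≤ 2 / (k + 2) := by
  -- `1/θ_{k+1} = 1/2 + √(1/4 + 1/θ_k²) ≥ 1/θ_k + 1/2`
  induction k with
  | zero => simp [hθ0]
  | succ k ih =>
    have ha := nesterov_pos hθ0 hθ k
    have hb := nesterov_pos hθ0 hθ (k + 1)
    have hsq := nesterov_succ_sq hθ k
    push_cast
    rw [le_div_iff₀ (by positivity)] at ih ⊢
    nlinarith [sq_nonneg (θ (k + 1) * (k + 3) - 2), sq_nonneg (θ k * (k + 2) - 2), mul_pos ha hb,
      sq_nonneg (θ k - θ (k + 1))]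

end NesterovSequence

section FastGradient

variable {E : Type*} [NormedAddCommGroup E] [InnerProductSpace ℝ E] {θ : ℕ → ℝ} {y v : ℕ → E}

/-- The point `r^k`, so that `v^k = (1 - θ_k) y^k + θ_k r^k`. -/
noncomputable def fgdCenter (θ : ℕ → ℝ) (y v : ℕ → E) (k : ℕ) : E :=
  (θ k)⁻¹ • (v k - (1 - θ k) • y k)

theorem fgdCenter_zero (hθ0 : θ 0 = 1) (hv0 : v 0 = y 0) : fgdCenter θ y v 0 = y 0 := by
  simp [fgdCenter, hθ0, hv0]

theorem eq_smul_add_smul_fgdCenter {k : ℕ} (hθ : θ k ≠ 0) :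
    v k = (1 - θ k) • y k + θ k • fgdCenter θ y v k := by
  simp only [fgdCenter, smul_smul, mul_inv_cancel₀ hθ, one_smul, add_sub_cancel]

theorem fgdCenter_succ {k : ℕ} {w : E} (hθ : θ (k + 1) ≠ 0)
    (hv : v (k + 1) = (1 - θ (k + 1)) • y (k + 1) + θ (k + 1) • w) :
    fgdCenter θ y v (k + 1) = w := by
  simp only [fgdCenter, hv, add_sub_cancel_left, smul_smul, inv_mul_cancel₀ hθ, one_smul]

theorem fgd_rate [CompleteSpace E] {f : E → ℝ} {L : ℝ} (hf : ConvexOn ℝ univ f)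
    (hdiff : Differentiable ℝ f) (hL : 0 < L) (hθ0 : θ 0 = 1)
    (hθ : ∀ k, θ (k + 1) = (1 / 2) * θ k * (Real.sqrt (θ k ^ 2 + 4) - θ k))
    (hv0 : v 0 = y 0)
    (hv : ∀ k, v (k + 1) = (1 - θ (k + 1)) • y (k + 1) +
      θ (k + 1) • (fgdCenter θ y v k - (L * θ k)⁻¹ • gradient f (v k)))
    (hdesc : ∀ k, f (y (k + 1)) ≤ f (v k) - (2 * L)⁻¹ * ‖gradient f (v k)‖ ^ 2) (x : E) (k : ℕ) :
    f (y (k + 1)) - f x ≤ 2 * L / (k + 2) ^ 2 * ‖y 0 - x‖ ^ 2 := by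
  have hpos := nesterov_pos hθ0 hθ
  have hstep : ∀ k, f (y (k + 1)) - f x ≤ (1 - θ k) * (f (y k) - f x) +
      L / 2 * θ k ^ 2 * (‖fgdCenter θ y v k - x‖ ^ 2 - ‖fgdCenter θ y v (k + 1) - x‖ ^ 2) := by
    intro k
    have hvk := eq_smul_add_smul_fgdCenter (y := y) (v := v) (hpos k).ne'
    rw [fgdCenter_succ (hpos (k + 1)).ne' (hv k)]
    exact accelerated_step_le hf hL (hpos k) (nesterov_le_one hθ0 hθ k)
      (hvk ▸ (hdiff (v k)).hasGradientAt) (hvk ▸ hdesc k)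
  calc f (y (k + 1)) - f x
      ≤ L / 2 * θ k ^ 2 * (‖fgdCenter θ y v 0 - x‖ ^ 2 - ‖fgdCenter θ y v (k + 1) - x‖ ^ 2) :=
        le_of_lyapunov_step (e := fun k => f (y k) - f x)
          (d := fun k => ‖fgdCenter θ y v k - x‖ ^ 2)
          hθ0 (nesterov_le_one hθ0 hθ) (nesterov_succ_sq hθ) hstep k
    _ ≤ L / 2 * θ k ^ 2 * ‖y 0 - x‖ ^ 2 := by
        rw [fgdCenter_zero hθ0 hv0]
        exact mul_le_mul_of_nonneg_left (sub_le_self _ (sq_nonneg _)) (by positivity)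
    _ ≤ L / 2 * (2 / ((k : ℝ) + 2)) ^ 2 * ‖y 0 - x‖ ^ 2 := by
        gcongr
        · exact (hpos k).le
        · exact nesterov_le_two_div hθ0 hθ k
    _ = 2 * L / (k + 2) ^ 2 * ‖y 0 - x‖ ^ 2 := by
        field_simp

end FastGradient

/-- convergence rate of the fast gradient decomposition algorithm
(Theorem `th:fast_grad_convergence`): `g(y^k) − g* ≤ 4c̄²‖y⁰ − y*‖²/(t(k+1)²)`. -/
theorem stmt18 {m : ℕ} (g : EuclideanSpace ℝ (Fin m) → ℝ)
    (hconv : ConvexOn ℝ Set.univ g) (hdiff : Differentiable ℝ g)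
    (t cbar : ℝ) (ht : 0 < t) (hcbar : 0 < cbar)
    (ystar : EuclideanSpace ℝ (Fin m))
    (θ : ℕ → ℝ) (hθ0 : θ 0 = 1)
    (hθ : ∀ k, θ (k + 1) = (1 / 2) * θ k * (Real.sqrt (θ k ^ 2 + 4) - θ k))
    (y v : ℕ → EuclideanSpace ℝ (Fin m)) (hv0 : v 0 = y 0)
    (hv : ∀ k, v (k + 1) = (1 - θ (k + 1)) • y (k + 1) +
      θ (k + 1) • ((θ k)⁻¹ • (v k - (1 - θ k) • y k) -
        (t / (2 * cbar ^ 2 * θ k)) • gradient g (v k)))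
    (hdec : ∀ k, g (y (k + 1)) ≤ g (v k) -
      (t / (4 * cbar ^ 2)) * ‖gradient g (v k)‖ ^ 2) :
    ∀ k : ℕ, 1 ≤ k →
      g (y k) - g ystar ≤
        (4 * cbar ^ 2 / (t * ((k : ℝ) + 1) ^ 2)) * ‖y 0 - ystar‖ ^ 2 := by
  have hρ : ∀ k, t / (2 * cbar ^ 2 * θ k) = (2 * cbar ^ 2 / t * θ k)⁻¹ := fun k => by
    rw [mul_inv, inv_div]
    ring
  have hκ : t / (4 * cbar ^ 2) = (2 * (2 * cbar ^ 2 / t))⁻¹ := by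
    field_simp
    ring
  have hrate := fgd_rate hconv hdiff (by positivity) hθ0 hθ hv0
    (fun k => by rw [hv k, hρ]; rfl) (fun k => hκ ▸ hdec k) ystar
  intro k hk
  obtain ⟨j, rfl⟩ : ∃ j, k = j + 1 := ⟨k - 1, by omega⟩
  convert hrate j using 2
  push_cast
  field_simp
  ring
end
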